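/- Let X_0(t,x) = e^{−kt} x + ψ_k(t)(a − σ²/4) with ψ_k(t) = (1−e^{−kt})/k (and ψ_0(t)=t), a,σ with σ² ≤ 4a, and fix T > 0. Then there exist constants such that for all t ∈ [0,T], L ∈ ℕ and x ≥ 0: 1 + X_0(t,x)^L ≤ (1 ∨ e^{−Lkt})(1 + C̃ t)(1 + x^L), where C̃ = e^{(−k)^+ T}(1 + e^{(−k)^+ T}(1∨T)(a − σ²/4))^L. -/
import Mathlib


/-- `ψ_k(t) = (1 − e^{−kt})/k`, with the convention `ψ_0(t) = t`. -/
noncomputable def psiK (k t : ℝ) : ℝ := if k = 0 then t else (1 - Real.exp (-k * t)) / k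

/-- The flow `X_0(t,x) = e^{−kt} x + ψ_k(t)(a − σ²/4)`. -/
noncomputable def flowX0 (a k σ t x : ℝ) : ℝ :=
  Real.exp (-k * t) * x + psiK k t * (a - σ ^ 2 / 4)

lemma psiK_nonneg (k t : ℝ) (ht : 0 ≤ t) : 0 ≤ psiK k t := by
  unfold psiK
  rcases lt_trichotomy k 0 with hk | hk | hk
  · rw [if_neg hk.ne]
    have h1 : 1 ≤ Real.exp (-k * t) := Real.one_le_exp (by nlinarith)
    exact div_nonneg_iff.mpr (Or.inr ⟨by linarith, hk.le⟩)
  · simp [hk, ht]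
  · rw [if_neg hk.ne']
    have h1 : Real.exp (-k * t) ≤ 1 := Real.exp_le_one_iff.mpr (by nlinarith)
    exact div_nonneg (by linarith) hk.le

lemma psiK_le (k T t : ℝ) (ht0 : 0 ≤ t) (htT : t ≤ T) :
    psiK k t ≤ Real.exp (max (-k) 0 * T) * t := by
  unfold psiK
  rcases lt_trichotomy k 0 with hk | hk | hk
  · rw [if_neg hk.ne, max_eq_left (by linarith : (0:ℝ) ≤ -k), div_le_iff_of_neg hk]
    have he1 : Real.exp (-k * t) ≤ Real.exp (-k * T) := Real.exp_le_exp.mpr (by nlinarith)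
    have he2 : k * t + 1 ≤ Real.exp (k * t) := Real.add_one_le_exp _
    have he3 : Real.exp (k * t) * Real.exp (-k * t) = 1 := by
      rw [← Real.exp_add]; ring_nf; exact Real.exp_zero
    have hp : (0:ℝ) < Real.exp (-k * t) := Real.exp_pos _
    nlinarith [mul_le_mul_of_nonneg_right he2 hp.le,
      mul_nonneg (mul_nonneg (neg_nonneg.2 hk.le) ht0) (sub_nonneg.2 he1)]
  · simp [hk, ht0]
  · rw [if_neg hk.ne', max_eq_right (by linarith : -k ≤ (0:ℝ)), zero_mul, Real.exp_zero,
      div_le_iff₀ hk]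
    have he2 : -k * t + 1 ≤ Real.exp (-k * t) := Real.add_one_le_exp _
    nlinarith

lemma pow_le_one_add_pow {x : ℝ} (hx : 0 ≤ x) {i L : ℕ} (h : i ≤ L) : x ^ i ≤ 1 + x ^ L := by
  rcases le_or_gt x 1 with h1 | h1
  · have h2 : x ^ i ≤ 1 := pow_le_one₀ hx h1
    have h3 : 0 ≤ x ^ L := pow_nonneg hx L
    linarith
  · have h2 : x ^ i ≤ x ^ L := pow_le_pow_right₀ h1.le h
    linarith

set_option maxHeartbeats 1000000 in
/-- For `σ² ≤ 4a`, `t ∈ [0,T]`, `x ≥ 0`: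
`1 + X_0(t,x)^L ≤ (1 ∨ e^{−Lkt})(1 + C̃ t)(1 + x^L)` with
`C̃ = e^{(−k)⁺T}(1 + e^{(−k)⁺T}(1∨T)(a − σ²/4))^L`. -/
theorem stmt_13 (a k σ T : ℝ) (ha : 0 ≤ a) (hσ : 0 < σ) (h4a : σ ^ 2 ≤ 4 * a)
    (hT : 0 < T) (L : ℕ) (t : ℝ) (ht : t ∈ Set.Icc 0 T) (x : ℝ) (hx : 0 ≤ x) :
    1 + flowX0 a k σ t x ^ L
      ≤ max 1 (Real.exp (-(L : ℝ) * k * t)) *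
          (1 + Real.exp (max (-k) 0 * T) *
              (1 + Real.exp (max (-k) 0 * T) * max 1 T * (a - σ ^ 2 / 4)) ^ L * t) *
          (1 + x ^ L) := by
  obtain ⟨ht0, htT⟩ := ht
  have hb : (0:ℝ) ≤ a - σ ^ 2 / 4 := by linarith
  set b := a - σ ^ 2 / 4 with hbdef
  set c := max (-k) 0 with hcdef
  have hc : 0 ≤ c := le_max_right _ _
  have hecT : 1 ≤ Real.exp (c * T) := Real.one_le_exp (mul_nonneg hc hT.le)
  set E := Real.exp (c * T) * max 1 T * b with hEdef
  have hE0 : 0 ≤ E := by positivity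
  have hψ0 := psiK_nonneg k t ht0
  have hψle := psiK_le k T t ht0 htT
  rw [← hcdef] at hψle
  set y := psiK k t * b with hydef
  have hy0 : 0 ≤ y := mul_nonneg hψ0 hb
  have hT1 : (1:ℝ) ≤ max 1 T := le_max_left _ _
  have hTm : T ≤ max 1 T := le_max_right _ _
  have hyEt : y ≤ E * t := by
    have h1 : y ≤ Real.exp (c * T) * t * b := mul_le_mul_of_nonneg_right hψle hb
    have h2 : Real.exp (c * T) * t * b ≤ E * t := by
      rw [hEdef]
      nlinarith [Real.exp_pos (c * T), mul_nonneg (Real.exp_pos (c*T)).le (mul_nonneg hb ht0)]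
    linarith
  have hyE : y ≤ E := by
    have h1 : y ≤ Real.exp (c * T) * t * b := mul_le_mul_of_nonneg_right hψle hb
    have h2 : Real.exp (c * T) * t * b ≤ E := by
      rw [hEdef]
      nlinarith [Real.exp_pos (c * T), mul_nonneg (Real.exp_pos (c*T)).le hb]
    linarith
  set m := max 1 (Real.exp (-k * t)) with hmdef
  have hm1 : (1:ℝ) ≤ m := le_max_left _ _
  have hX0 : 0 ≤ flowX0 a k σ t x := by
    unfold flowX0
    have := mul_nonneg (Real.exp_pos (-k*t)).le hx
    nlinarith [mul_nonneg hψ0 hb]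
  have hX : flowX0 a k σ t x ≤ m * (x + y) := by
    have h1 : Real.exp (-k * t) ≤ m := le_max_right _ _
    show Real.exp (-k * t) * x + psiK k t * (a - σ ^ 2 / 4) ≤ m * (x + y)
    have h2 : psiK k t * (a - σ ^ 2 / 4) = y := rfl
    rw [h2]
    nlinarith [mul_le_mul_of_nonneg_right h1 hx, mul_nonneg (sub_nonneg.2 hm1) hy0]
  have hXL : flowX0 a k σ t x ^ L ≤ m ^ L * (x + y) ^ L := by
    calc flowX0 a k σ t x ^ L ≤ (m * (x + y)) ^ L := pow_le_pow_left₀ hX0 hX L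
      _ = m ^ L * (x + y) ^ L := mul_pow _ _ _
  have hML : m ^ L = max 1 (Real.exp (-(L : ℝ) * k * t)) := by
    rw [hmdef]
    rcases le_or_gt (Real.exp (-k * t)) 1 with h1 | h1
    · have e1 : Real.exp (-k*t) ^ L ≤ 1 := pow_le_one₀ (Real.exp_pos _).le h1
      have e2 : Real.exp (-(L : ℝ) * k * t) = Real.exp (-k*t) ^ L := by
        rw [← Real.exp_nat_mul]; congr 1; ring
      rw [max_eq_left h1, one_pow, max_eq_left (by rw [e2]; exact e1)]
    · have e1 : (1:ℝ) ≤ Real.exp (-k*t) ^ L := one_le_pow₀ h1.le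
      have e2 : Real.exp (-(L : ℝ) * k * t) = Real.exp (-k*t) ^ L := by
        rw [← Real.exp_nat_mul]; congr 1; ring
      rw [max_eq_right h1.le, max_eq_right (by rw [e2]; exact e1), e2]
  have hbinom := add_pow x y L
  rw [Finset.sum_range_succ] at hbinom
  simp only [Nat.sub_self, pow_zero, mul_one, Nat.choose_self, Nat.cast_one] at hbinom
  have hS : ∑ i ∈ Finset.range L, x ^ i * y ^ (L - i) * (L.choose i : ℝ)
      ≤ ∑ i ∈ Finset.range L, (1 + x ^ L) * (E ^ (L - i) * t) * (L.choose i : ℝ) := by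
    apply Finset.sum_le_sum
    intro i hi
    have hiL : i < L := Finset.mem_range.mp hi
    have hx1 : x ^ i ≤ 1 + x ^ L := pow_le_one_add_pow hx hiL.le
    have hy1 : y ^ (L - i) ≤ E ^ (L - i) * t := by
      have h1 : L - i = (L - i - 1) + 1 := by omega
      rw [h1, pow_succ, pow_succ]
      calc y ^ (L - i - 1) * y ≤ E ^ (L - i - 1) * (E * t) :=
            mul_le_mul (pow_le_pow_left₀ hy0 hyE _) hyEt hy0 (by positivity)
        _ = E ^ (L - i - 1) * E * t := by ring
    exact mul_le_mul_of_nonneg_right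
      (mul_le_mul hx1 hy1 (by positivity) (by positivity)) (Nat.cast_nonneg _)
  have h2 : ∑ i ∈ Finset.range L, (E ^ (L - i) * (L.choose i : ℝ)) = (1 + E) ^ L - 1 := by
    have h1 := add_pow 1 E L
    rw [Finset.sum_range_succ] at h1
    simp only [one_pow, one_mul, Nat.choose_self, Nat.cast_one, Nat.sub_self, pow_zero,
      mul_one] at h1
    linarith
  have hsum : ∑ i ∈ Finset.range L, (1 + x ^ L) * (E ^ (L - i) * t) * (L.choose i : ℝ)
      = (1 + x ^ L) * t * ((1 + E) ^ L - 1) := by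
    rw [← h2, Finset.mul_sum]
    apply Finset.sum_congr rfl
    intro i _
    ring
  have hfinal : flowX0 a k σ t x ^ L
      ≤ m ^ L * (x ^ L + (1 + x ^ L) * t * ((1 + E) ^ L - 1)) := by
    calc flowX0 a k σ t x ^ L ≤ m ^ L * (x + y) ^ L := hXL
      _ = m ^ L * ((∑ i ∈ Finset.range L, x ^ i * y ^ (L - i) * (L.choose i : ℝ)) + x ^ L) := by
          rw [hbinom]
      _ ≤ _ := by
          apply mul_le_mul_of_nonneg_left _ (by positivity)
          rw [hsum] at hS
          linarith
  rw [← hML]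
  have hQ1 : (1:ℝ) ≤ (1 + E) ^ L := one_le_pow₀ (by linarith)
  have hmL1 : (1:ℝ) ≤ m ^ L := one_le_pow₀ hm1
  have h1X : (0:ℝ) ≤ 1 + x ^ L := by positivity
  have key : 0 ≤ m ^ L * t * ((1 + x ^ L) * (Real.exp (c * T) * (1 + E) ^ L - ((1 + E) ^ L - 1))) := by
    apply mul_nonneg (mul_nonneg (by positivity) ht0)
    apply mul_nonneg h1X
    have h6 : 0 ≤ (Real.exp (c * T) - 1) * (1 + E) ^ L :=
      mul_nonneg (by linarith) (by positivity)
    nlinarith [h6]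
  have h5 : max 1 (Real.exp (-k * t)) ^ L * (1 + Real.exp (c * T) * (1 + E) ^ L * t) * (1 + x ^ L)
      - (1 + max 1 (Real.exp (-k * t)) ^ L * (x ^ L + (1 + x ^ L) * t * ((1 + E) ^ L - 1)))
      = (max 1 (Real.exp (-k * t)) ^ L - 1)
        + max 1 (Real.exp (-k * t)) ^ L * t *
          ((1 + x ^ L) * (Real.exp (c * T) * (1 + E) ^ L - ((1 + E) ^ L - 1))) := by ring
  linarith [hfinal, key, hmL1, h5]
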